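/- arXiv:2410.17704 — 2 statements merged into one kernel-verified Lean document; each statement's English description precedes it below -/
import Mathlib

section
/- Let M(ε) be the 3×3 symmetric matrix whose (I,J) entry is c_{IJ} ε^{ν_{IJ}} with exponent matrix ν = [[5,3,2],[3,2,1],[2,1,0]] and generic order-one coefficients c_{IJ} = c_{JI} ≠ 0. Then e_1(M) = Θ(1), e_2(M) = Θ(ε^2) and e_3(M) = Θ(ε^6) generically, so the naturalness conditions 2r_3 < r_2 and 2r_2 < r_1 hold with (r_3, r_2, r_1) = (0, 2, 6). -/
open Asymptotics Topology

lemma aux_theta_one (g : ℝ → ℝ) (hg : ContinuousAt g 0) (h0 : g 0 ≠ 0) :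
    g =Θ[𝓝[>] (0 : ℝ)] fun _ => (1 : ℝ) := by
  have ht : Filter.Tendsto g (𝓝[>] (0 : ℝ)) (𝓝 (g 0)) :=
    hg.continuousWithinAt.tendsto
  have hequiv : g ~[𝓝[>] (0 : ℝ)] fun _ => g 0 :=
    (Asymptotics.isEquivalent_const_iff_tendsto h0).2 ht
  exact hequiv.isTheta.trans (Asymptotics.isTheta_const_const h0 one_ne_zero)

lemma aux_theta_pow (g : ℝ → ℝ) (hg : ContinuousAt g 0) (h0 : g 0 ≠ 0) (k : ℕ) :
    (fun ε : ℝ => ε ^ k * g ε) =Θ[𝓝[>] (0 : ℝ)] fun ε => ε ^ k := by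
  have h1 := (Asymptotics.isTheta_refl (fun ε : ℝ => ε ^ k) (𝓝[>] (0 : ℝ))).mul
    (aux_theta_one g hg h0)
  simpa using h1

/-- For the symmetric 3×3 matrix with entries `c_{IJ} ε^{ν_{IJ}}`, exponent
matrix `ν = [[5,3,2],[3,2,1],[2,1,0]]` and generic order-one coefficients,
one has `e₁ = Θ(1)`, `e₂ = Θ(ε²)`, `e₃ = Θ(ε⁶)`, so the naturalness
conditions hold with `(r₃, r₂, r₁) = (0, 2, 6)`. -/
theorem stmt_5 (c : Fin 3 → Fin 3 → ℝ) (hsymc : ∀ I J, c I J = c J I)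
    (hc : ∀ I J, c I J ≠ 0)
    (hgen1 : c 2 2 ≠ 0)
    (hgen2 : c 1 1 * c 2 2 - c 1 2 ^ 2 ≠ 0)
    (hgen3 : 2 * c 0 1 * c 1 2 * c 0 2 - c 1 1 * c 0 2 ^ 2 - c 2 2 * c 0 1 ^ 2 ≠ 0)
    (M : ℝ → Matrix (Fin 3) (Fin 3) ℝ)
    (hM : ∀ ε : ℝ, M ε =
      !![c 0 0 * ε ^ 5, c 0 1 * ε ^ 3, c 0 2 * ε ^ 2;
         c 0 1 * ε ^ 3, c 1 1 * ε ^ 2, c 1 2 * ε;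
         c 0 2 * ε ^ 2, c 1 2 * ε, c 2 2]) :
    ((fun ε => (M ε).trace) =Θ[𝓝[>] (0 : ℝ)] fun _ => (1 : ℝ)) ∧
    ((fun ε => ((M ε).trace ^ 2 - (M ε * M ε).trace) / 2)
        =Θ[𝓝[>] (0 : ℝ)] fun ε => ε ^ 2) ∧
    ((fun ε => (M ε).det) =Θ[𝓝[>] (0 : ℝ)] fun ε => ε ^ 6) ∧
    (2 * 0 < 2 ∧ 2 * 2 < 6) := by
  refine ⟨?_, ?_, ?_, by norm_num, by norm_num⟩
  · have heq : (fun ε => (M ε).trace) =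
        fun ε : ℝ => c 0 0 * ε ^ 5 + c 1 1 * ε ^ 2 + c 2 2 := by
      funext ε
      simp [hM ε, Matrix.trace_fin_three]
    rw [heq]
    exact aux_theta_one _ (by fun_prop) (by simpa using hgen1)
  · have heq : (fun ε => ((M ε).trace ^ 2 - (M ε * M ε).trace) / 2) =
        fun ε : ℝ => ε ^ 2 *
          (c 0 0 * c 1 1 * ε ^ 5 - c 0 1 ^ 2 * ε ^ 4 + c 0 0 * c 2 2 * ε ^ 3
            - c 0 2 ^ 2 * ε ^ 2 + (c 1 1 * c 2 2 - c 1 2 ^ 2)) := by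
      funext ε
      simp [hM ε, Matrix.trace_fin_three, Matrix.mul_fin_three]
      ring
    rw [heq]
    exact aux_theta_pow _ (by fun_prop) (by simpa using hgen2) 2
  · have heq : (fun ε => (M ε).det) =
        fun ε : ℝ => ε ^ 6 *
          ((c 0 0 * c 1 1 * c 2 2 - c 0 0 * c 1 2 ^ 2) * ε +
           (2 * c 0 1 * c 1 2 * c 0 2 - c 1 1 * c 0 2 ^ 2 - c 2 2 * c 0 1 ^ 2)) := by
      funext ε
      simp [hM ε, Matrix.det_fin_three]
      ring
    rw [heq]
    exact aux_theta_pow _ (by fun_prop) (by simpa using hgen3) 6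
end

section
/- Let M(ε) be the 3×3 symmetric matrix with exponent matrix ν = [[3,2,1],[2,2,1],[2,1,0]] (entries M_{IJ} = c_{IJ} ε^{ν_{IJ}}). Then the leading ε-powers of (e_1, e_2, e_3) are (r_3, r_2, r_1) = (0, 2, 4), which violates the naturalness condition 2 r_2 < r_1; consequently the two smallest eigenvalues are both Θ(ε^2) for generic coefficients, i.e. their ratio does not tend to 0 or ∞ as ε → 0. -/
/-!
Each invariant of `M ε` is `ε ^ r` times a polynomial in `ε` whose constant term is one of the
generic coefficients, so `e₁ ≍ 1`, `e₂ ≍ ε²`, `e₃ ≍ ε⁴`. For positive ordered roots `λ₁ ≤ λ₂ ≤ λ₃`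
one has `λ₃ ≤ e₁ ≤ 3λ₃`, `λ₁λ₂ = e₃ / λ₃` and `λ₁ + λ₂ = (e₂ - λ₁λ₂) / λ₃`. As soon as
`e₃ = o(e₁e₂)` the product `λ₁λ₂` is negligible against `e₂`, whence `λ₂ ≍ λ₁ + λ₂ ≍ e₂ / e₁` and
`λ₁ = λ₁λ₂ / λ₂ ≍ e₃ / e₂`. Here both quotients are `≍ ε²`: this is what `r₁ = 2r₂` means.
-/

open Asymptotics Topology Filter

section Asymptotics

variable {α : Type*} {l : Filter α}

theorem isTheta_of_pos_of_le_of_le {f g : α → ℝ} (C : ℝ) (hf : ∀ᶠ x in l, 0 < f x)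
    (hfg : ∀ᶠ x in l, f x ≤ g x) (hgf : ∀ᶠ x in l, g x ≤ C * f x) : f =Θ[l] g := by
  refine ⟨IsBigO.of_bound 1 ?_, IsBigO.of_bound C ?_⟩ <;>
    filter_upwards [hf, hfg, hgf] with x h0 h1 h2 <;>
    rw [Real.norm_of_nonneg h0.le, Real.norm_of_nonneg (h0.le.trans h1)] <;> linarith

theorem isTheta_pow_mul_of_continuousAt {𝕜 : Type*} [NormedField 𝕜] {g : 𝕜 → 𝕜}
    (hg : ContinuousAt g 0) (h0 : g 0 ≠ 0) (k : ℕ) :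
    (fun x => x ^ k * g x) =Θ[𝓝 0] fun x => x ^ k := by
  have : g =Θ[𝓝 0] fun _ => (1 : 𝕜) :=
    ((isEquivalent_const_iff_tendsto h0).2 hg.tendsto).isTheta.trans
      (isTheta_const_const h0 one_ne_zero)
  simpa using (isTheta_refl (fun x : 𝕜 => x ^ k) _).mul this

theorem isTheta_eigenvalues_of_isLittleO {μ₁ μ₂ μ₃ e₁ e₂ e₃ : α → ℝ}
    (hord : ∀ᶠ x in l, 0 < μ₁ x ∧ μ₁ x ≤ μ₂ x ∧ μ₂ x ≤ μ₃ x)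
    (he₁ : ∀ᶠ x in l, μ₁ x + μ₂ x + μ₃ x = e₁ x)
    (he₂ : ∀ᶠ x in l, μ₁ x * μ₂ x + μ₁ x * μ₃ x + μ₂ x * μ₃ x = e₂ x)
    (he₃ : ∀ᶠ x in l, μ₁ x * μ₂ x * μ₃ x = e₃ x)
    (hsep : e₃ =o[l] fun x => e₁ x * e₂ x) :
    μ₃ =Θ[l] e₁ ∧ μ₂ =Θ[l] (fun x => e₂ x / e₁ x) ∧ μ₁ =Θ[l] (fun x => e₃ x / e₂ x) := by
  have hμ₂ : ∀ᶠ x in l, 0 < μ₂ x := hord.mono fun x h => h.1.trans_le h.2.1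
  have hμ₃ : ∀ᶠ x in l, 0 < μ₃ x := hord.mono fun x h => (h.1.trans_le h.2.1).trans_le h.2.2
  have he₁_ne : ∀ᶠ x in l, e₁ x ≠ 0 := by
    filter_upwards [hord, hμ₃, he₁] with x h h₃ h₁
    linarith
  have h₃ : μ₃ =Θ[l] e₁ := by
    refine isTheta_of_pos_of_le_of_le 3 hμ₃ ?_ ?_ <;>
      filter_upwards [hord, he₁] with x h h₁ <;> linarith
  have hprod : (fun x => μ₁ x * μ₂ x) =Θ[l] fun x => e₃ x / e₁ x := by
    refine EventuallyEq.trans_isTheta ?_ ((isTheta_refl e₃ l).div h₃)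
    filter_upwards [hμ₃, he₃] with x h₃ h
    rw [← h, mul_div_cancel_right₀ _ h₃.ne']
  have hprod_small : (fun x => μ₁ x * μ₂ x) =o[l] e₂ := by
    refine hprod.trans_isLittleO ?_
    have := hsep.mul_isBigO (isBigO_refl (fun x => (e₁ x)⁻¹) l)
    refine (this.congr_left fun x => (div_eq_mul_inv _ _).symm).trans_eventuallyEq ?_
    filter_upwards [he₁_ne] with x h
    field_simp
  have hsum : (fun x => μ₁ x + μ₂ x) =Θ[l] fun x => e₂ x / e₁ x := by
    refine EventuallyEq.trans_isTheta ?_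
      (((isTheta_refl e₂ l).add_isLittleO hprod_small.neg_left).div h₃)
    filter_upwards [hμ₃, he₂] with x h₃ h
    field_simp
    simp only [Pi.add_apply, ← h]
    ring
  have h₂ : μ₂ =Θ[l] fun x => e₂ x / e₁ x := by
    refine (isTheta_of_pos_of_le_of_le 2 hμ₂ ?_ ?_).trans hsum <;>
      filter_upwards [hord] with x h <;> linarith
  refine ⟨h₃, h₂, ?_⟩
  refine EventuallyEq.trans_isTheta ?_ ((hprod.div h₂).trans_eventuallyEq ?_)
  · filter_upwards [hμ₂] with x h
    rw [mul_div_cancel_right₀ _ h.ne']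
  · filter_upwards [he₁_ne] with x h
    rw [div_div_div_cancel_right₀ h]

end Asymptotics

def nuScaledMatrix (c : Fin 3 → Fin 3 → ℝ) (ε : ℝ) : Matrix (Fin 3) (Fin 3) ℝ :=
  !![c 0 0 * ε ^ 3, c 0 1 * ε ^ 2, c 0 2 * ε;
     c 1 0 * ε ^ 2, c 1 1 * ε ^ 2, c 1 2 * ε;
     c 2 0 * ε ^ 2, c 2 1 * ε, c 2 2]

section nuScaledMatrix

variable (c : Fin 3 → Fin 3 → ℝ)

theorem isTheta_trace_nuScaledMatrix (h : c 2 2 ≠ 0) :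
    (fun ε => (nuScaledMatrix c ε).trace) =Θ[𝓝 0] fun _ => (1 : ℝ) := by
  have hformula (ε : ℝ) :
      (nuScaledMatrix c ε).trace = ε ^ 0 * (c 2 2 + ε ^ 2 * (c 1 1 + ε * c 0 0)) := by
    simp only [nuScaledMatrix, Matrix.trace_fin_three_of, pow_zero, one_mul]
    ring
  simp only [hformula]
  simpa using isTheta_pow_mul_of_continuousAt (by fun_prop) (by simpa) 0

theorem isTheta_trace_sq_sub_trace_mul_self_nuScaledMatrix
    (h : c 1 1 * c 2 2 - c 1 2 * c 2 1 ≠ 0) :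
    (fun ε => ((nuScaledMatrix c ε).trace ^ 2
        - (nuScaledMatrix c ε * nuScaledMatrix c ε).trace) / 2) =Θ[𝓝 0] fun ε => ε ^ 2 := by
  have hformula (ε : ℝ) :
      ((nuScaledMatrix c ε).trace ^ 2 - (nuScaledMatrix c ε * nuScaledMatrix c ε).trace) / 2
        = ε ^ 2 * (c 1 1 * c 2 2 - c 1 2 * c 2 1 + ε * (c 0 0 * c 2 2 - c 0 2 * c 2 0
          + ε * (ε * (c 0 0 * c 1 1) - c 0 1 * c 1 0))) := by
    simp only [nuScaledMatrix, Matrix.trace_fin_three, Matrix.mul_apply, Fin.sum_univ_three,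
      Matrix.of_apply, Matrix.cons_val', Matrix.cons_val_zero, Matrix.cons_val_fin_one,
      Matrix.cons_val_one, Matrix.cons_val]
    ring
  simp only [hformula]
  exact isTheta_pow_mul_of_continuousAt (by fun_prop) (by simpa) 2

theorem isTheta_det_nuScaledMatrix
    (h : c 0 2 * c 1 0 * c 2 1 - c 0 1 * c 1 0 * c 2 2 ≠ 0) :
    (fun ε => (nuScaledMatrix c ε).det) =Θ[𝓝 0] fun ε => ε ^ 4 := by
  have hformula (ε : ℝ) :
      (nuScaledMatrix c ε).det = ε ^ 4 * (c 0 2 * c 1 0 * c 2 1 - c 0 1 * c 1 0 * c 2 2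
        + ε * (c 0 0 * c 1 1 * c 2 2 - c 0 0 * c 1 2 * c 2 1
          + c 0 1 * c 1 2 * c 2 0 - c 0 2 * c 1 1 * c 2 0)) := by
    simp only [nuScaledMatrix, Matrix.det_fin_three, Matrix.of_apply, Matrix.cons_val',
      Matrix.cons_val_zero, Matrix.cons_val_fin_one, Matrix.cons_val_one, Matrix.cons_val]
    ring
  simp only [hformula]
  exact isTheta_pow_mul_of_continuousAt (by fun_prop) (by simpa) 4

end nuScaledMatrix

theorem stmt_6_general (c : Fin 3 → Fin 3 → ℝ)
    (hgen1 : c 2 2 ≠ 0)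
    (hgen2 : c 1 1 * c 2 2 - c 1 2 * c 2 1 ≠ 0)
    (hgen3 : c 0 2 * c 1 0 * c 2 1 - c 0 1 * c 1 0 * c 2 2 ≠ 0)
    (M : ℝ → Matrix (Fin 3) (Fin 3) ℝ)
    (hM : ∀ ε : ℝ, M ε =
      !![c 0 0 * ε ^ 3, c 0 1 * ε ^ 2, c 0 2 * ε;
         c 1 0 * ε ^ 2, c 1 1 * ε ^ 2, c 1 2 * ε;
         c 2 0 * ε ^ 2, c 2 1 * ε, c 2 2])
    (lam1 lam2 lam3 : ℝ → ℝ)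
    (hord : ∀ ε ∈ Set.Ioo (0 : ℝ) 1,
        0 < lam1 ε ∧ lam1 ε ≤ lam2 ε ∧ lam2 ε ≤ lam3 ε)
    (heig : ∀ ε ∈ Set.Ioo (0 : ℝ) 1,
        lam1 ε + lam2 ε + lam3 ε = (M ε).trace ∧
        lam1 ε * lam2 ε + lam1 ε * lam3 ε + lam2 ε * lam3 ε
          = ((M ε).trace ^ 2 - (M ε * M ε).trace) / 2 ∧
        lam1 ε * lam2 ε * lam3 ε = (M ε).det) :
    ((fun ε => (M ε).trace) =Θ[𝓝[>] (0 : ℝ)] fun _ => (1 : ℝ)) ∧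
    ((fun ε => ((M ε).trace ^ 2 - (M ε * M ε).trace) / 2)
        =Θ[𝓝[>] (0 : ℝ)] fun ε => ε ^ 2) ∧
    ((fun ε => (M ε).det) =Θ[𝓝[>] (0 : ℝ)] fun ε => ε ^ 4) ∧
    ¬ (2 * 2 < 4) ∧
    (lam1 =Θ[𝓝[>] (0 : ℝ)] fun ε => ε ^ 2) ∧
    (lam2 =Θ[𝓝[>] (0 : ℝ)] fun ε => ε ^ 2) := by
  obtain rfl : M = nuScaledMatrix c := funext hM
  have hle : 𝓝[>] (0 : ℝ) ≤ 𝓝 0 := nhdsWithin_le_nhds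
  have he₁ := (isTheta_trace_nuScaledMatrix c hgen1).mono hle
  have he₂ := (isTheta_trace_sq_sub_trace_mul_self_nuScaledMatrix c hgen2).mono hle
  have he₃ := (isTheta_det_nuScaledMatrix c hgen3).mono hle
  have hsep := he₃.trans_isLittleO <| ((isLittleO_pow_pow (by norm_num : 2 < 4)).mono hle).trans_isTheta
    (by simpa using (he₁.mul he₂).symm)
  have hIoo : Set.Ioo (0 : ℝ) 1 ∈ 𝓝[>] 0 := Ioo_mem_nhdsGT one_pos
  have heig' := eventually_of_mem hIoo heig
  obtain ⟨-, h₂, h₁⟩ := isTheta_eigenvalues_of_isLittleO (eventually_of_mem hIoo hord)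
    (heig'.mono fun _ h => h.1) (heig'.mono fun _ h => h.2.1) (heig'.mono fun _ h => h.2.2) hsep
  refine ⟨he₁, he₂, he₃, by norm_num, h₁.trans ((he₃.div he₂).trans_eventuallyEq ?_),
    by simpa using h₂.trans (he₂.div he₁)⟩
  filter_upwards [self_mem_nhdsWithin] with ε (hε : 0 < ε)
  field_simp

/-- For the 3×3 matrix with entries `c_{IJ} ε^{ν_{IJ}}` and exponent matrix
`ν = [[3,2,1],[2,2,1],[2,1,0]]`, the leading ε-powers of `(e₁,e₂,e₃)` are
`(r₃,r₂,r₁) = (0,2,4)`, violating `2r₂ < r₁`; consequently the two smallest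
(positive, ordered) eigenvalues are both `Θ(ε²)` for generic coefficients. -/
theorem stmt_6 (c : Fin 3 → Fin 3 → ℝ) (hc : ∀ I J, c I J ≠ 0)
    (hgen1 : c 2 2 ≠ 0)
    (hgen2 : c 1 1 * c 2 2 - c 1 2 * c 2 1 ≠ 0)
    (hgen3 : c 0 2 * c 1 0 * c 2 1 - c 0 1 * c 1 0 * c 2 2 ≠ 0)
    (M : ℝ → Matrix (Fin 3) (Fin 3) ℝ)
    (hM : ∀ ε : ℝ, M ε =
      !![c 0 0 * ε ^ 3, c 0 1 * ε ^ 2, c 0 2 * ε;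
         c 1 0 * ε ^ 2, c 1 1 * ε ^ 2, c 1 2 * ε;
         c 2 0 * ε ^ 2, c 2 1 * ε, c 2 2])
    (lam1 lam2 lam3 : ℝ → ℝ)
    (hord : ∀ ε ∈ Set.Ioo (0 : ℝ) 1,
        0 < lam1 ε ∧ lam1 ε ≤ lam2 ε ∧ lam2 ε ≤ lam3 ε)
    (heig : ∀ ε ∈ Set.Ioo (0 : ℝ) 1,
        lam1 ε + lam2 ε + lam3 ε = (M ε).trace ∧
        lam1 ε * lam2 ε + lam1 ε * lam3 ε + lam2 ε * lam3 ε
          = ((M ε).trace ^ 2 - (M ε * M ε).trace) / 2 ∧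
        lam1 ε * lam2 ε * lam3 ε = (M ε).det) :
    ((fun ε => (M ε).trace) =Θ[𝓝[>] (0 : ℝ)] fun _ => (1 : ℝ)) ∧
    ((fun ε => ((M ε).trace ^ 2 - (M ε * M ε).trace) / 2)
        =Θ[𝓝[>] (0 : ℝ)] fun ε => ε ^ 2) ∧
    ((fun ε => (M ε).det) =Θ[𝓝[>] (0 : ℝ)] fun ε => ε ^ 4) ∧
    ¬ (2 * 2 < 4) ∧
    (lam1 =Θ[𝓝[>] (0 : ℝ)] fun ε => ε ^ 2) ∧
    (lam2 =Θ[𝓝[>] (0 : ℝ)] fun ε => ε ^ 2) :=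
  stmt_6_general c hgen1 hgen2 hgen3 M hM lam1 lam2 lam3 hord heig
end
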